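/- arXiv:2509.10232 — 7 statements merged into one kernel-verified Lean document; each statement's English description precedes it below -/
import Mathlib

section
/- Let M be a symmetric n×n matrix over F_2 with rank at least 2. Then M contains a 2×2 principal submatrix of rank 2. -/
/-!
If every `2 × 2` principal minor of a symmetric matrix `M` over `F₂` vanishes, then
`M i i * M j j = M i j * M j i = M i j ^ 2 = M i j`, so `M` is the outer product of its
diagonal with itself and has rank at most 1.
-/

namespace Matrix

theorem det_submatrix_pair_of_isSymm {R n : Type*} [CommRing R] {M : Matrix n n R}
    (hM : M.IsSymm) (i j : n) :
    (M.submatrix ![i, j] ![i, j]).det = M i i * M j j - M i j ^ 2 := by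
  rw [det_fin_two]
  simp [sq, hM.apply i j]

theorem eq_vecMulVec_diag_of_det_submatrix_pair_eq_zero {n : Type*}
    {M : Matrix n n (ZMod 2)} (hM : M.IsSymm)
    (hdet : ∀ i j, i ≠ j → (M.submatrix ![i, j] ![i, j]).det = 0) :
    M = vecMulVec M.diag M.diag := by
  ext i j
  rcases eq_or_ne i j with rfl | hij
  · exact (ZMod.pow_card (M i i)).symm.trans (sq _)
  · have h := hdet i j hij
    rw [det_submatrix_pair_of_isSymm hM, ZMod.pow_card, sub_eq_zero] at h
    exact h.symm

end Matrix

/-- Any symmetric matrix over `F₂` of rank at least 2 has a `2 × 2` principal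
submatrix of rank 2. -/
theorem exists_principal_2x2_rank_two {n : ℕ}
    (M : Matrix (Fin n) (Fin n) (ZMod 2)) (hM : M.IsSymm) (h : 2 ≤ M.rank) :
    ∃ f : Fin 2 → Fin n, Function.Injective f ∧ (M.submatrix f f).rank = 2 := by
  by_contra! hsmall
  have hdet : ∀ i j, i ≠ j → (M.submatrix ![i, j] ![i, j]).det = 0 := by
    intro i j hij
    by_contra hne
    apply hsmall _ (injective_pair_iff_ne.mpr hij)
    simpa using Matrix.rank_of_det_mem_nonZeroDivisors (mem_nonZeroDivisors_of_ne_zero hne)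
  have hM1 : M.rank ≤ 1 := by
    rw [Matrix.eq_vecMulVec_diag_of_det_submatrix_pair_eq_zero hM hdet]
    exact Matrix.rank_vecMulVec_le _ _
  omega
end

section
/- Let A be a symmetric n×n matrix over F_2 of rank r. Then there exists an r×r principal submatrix of A having rank r. -/
/-!
Pick rows `g` of `A` forming a basis of its row space; there are `rank A` of them. Since every
row of `A` is a combination of the rows `g`, deleting the other rows does not change the rank of
any column-submatrix: `rank A[g, g] = rank A[:, g]` and `rank A[g, :] = rank A`. Symmetry gives
`A[:, g] = A[g, :]ᵀ`, so `rank A[g, g] = rank A`.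
-/

open Submodule

namespace Matrix

variable {K : Type*} [Field K] {m n ι κ : Type*}

theorem rank_submatrix_eq_of_span_rows_eq [Finite m] [Finite ι] [Fintype κ]
    (M : Matrix m n K) {g : ι → m} (hg : span K (Set.range (M.row ∘ g)) = span K (Set.range M.row))
    (h : κ → n) : (M.submatrix g h).rank = (M.submatrix id h).rank := by
  rw [rank_eq_finrank_span_row, rank_eq_finrank_span_row]
  let restrict : (n → K) →ₗ[K] κ → K := LinearMap.funLeft K K h
  have hrows : (M.submatrix g h).row = restrict ∘ M.row ∘ g := rfl
  have hrows' : (M.submatrix id h).row = restrict ∘ M.row := rfl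
  rw [hrows, hrows', Set.range_comp restrict, Set.range_comp restrict, ← map_span, ← map_span, hg]

theorem IsSymm.rank_submatrix_self_eq_rank [Fintype n] [Fintype ι] {M : Matrix n n K}
    (hM : M.IsSymm) {g : ι → n} (hg : span K (Set.range (M.row ∘ g)) = span K (Set.range M.row)) :
    (M.submatrix g g).rank = M.rank := by
  have hcols : (M.submatrix id g)ᵀ = M.submatrix g id := by
    rw [transpose_submatrix, hM.eq]
  calc (M.submatrix g g).rank = (M.submatrix id g).rank := M.rank_submatrix_eq_of_span_rows_eq hg g
    _ = (M.submatrix g id).rank := by rw [← rank_transpose, hcols]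
    _ = (M.submatrix id id).rank := M.rank_submatrix_eq_of_span_rows_eq hg id
    _ = M.rank := rfl

theorem exists_injective_fin_rank_span_rows_eq [Finite m] [Fintype n] (M : Matrix m n K) :
    ∃ g : Fin M.rank → m, Function.Injective g ∧
      span K (Set.range (M.row ∘ g)) = span K (Set.range M.row) := by
  obtain ⟨κ, a, ha, hspan, hli⟩ := exists_linearIndependent' K M.row
  have : Finite κ := Finite.of_injective a ha
  have : Fintype κ := Fintype.ofFinite κ
  have hcard : Fintype.card κ = M.rank := by
    rw [rank_eq_finrank_span_row, ← hspan, finrank_span_eq_card hli]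
  let e : Fin M.rank ≃ κ := (Fintype.equivFinOfCardEq hcard).symm
  refine ⟨a ∘ e, ha.comp e.injective, ?_⟩
  rw [← hspan, ← Function.comp_assoc, EquivLike.range_comp]

end Matrix

/-- A symmetric matrix over `F₂` of rank `r` has an `r × r` principal submatrix
of rank `r`. -/
theorem exists_principal_fullrank_submatrix {n r : ℕ}
    (A : Matrix (Fin n) (Fin n) (ZMod 2)) (hA : A.IsSymm) (hr : A.rank = r) :
    ∃ f : Fin r → Fin n, Function.Injective f ∧ (A.submatrix f f).rank = r := by
  subst hr
  obtain ⟨g, hg, hspan⟩ := A.exists_injective_fin_rank_span_rows_eq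
  exact ⟨g, hg, hA.rank_submatrix_self_eq_rank hspan⟩
end

section
/- Let A be an n×n symmetric matrix over F_2 of rank k. Then either A = X·Xᵀ for some n×k matrix X over F_2 of rank k, or A = X·Xᵀ for some n×(k+1) matrix X over F_2 of rank k and k is even. -/
/-!
Symmetric Gaussian elimination. If `A i i = 1`, subtracting `v vᵀ` (with `v` the `i`-th column)
lowers the rank by one; if the diagonal vanishes and `A i j = 1`, subtracting `a bᵀ + b aᵀ`
(with `a`, `b` the `i`-th and `j`-th columns) lowers it by two and keeps the diagonal zero.
Over `F₂` the diagonal of `X Xᵀ` is `X 1`, so by induction on the rank a matrix with zero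
diagonal has even rank `k` and is `X Xᵀ` with `k + 1` columns and `X 1 = 0`. When `A i i = 1`
and `A - v vᵀ` is of this kind, the extra column is absorbed by adding `v` to every column of
`X`, since `(k + 1) v vᵀ = v vᵀ`; otherwise `v` is prepended. The ranks of the factors are forced:
`rank A ≤ rank X ≤ #columns`, with strict inequality on the right when `X 1 = 0`.
-/

open Matrix LinearMap Submodule

theorem ZMod.eq_one_of_ne_zero {x : ZMod 2} (hx : x ≠ 0) : x = 1 := by
  revert x
  decide

namespace Matrix

variable {m n R K : Type*}

section IsSymm

variable [CommRing R] {A : Matrix n n R}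

theorem IsSymm.sub_vecMulVec_self (hA : A.IsSymm) (v : n → R) :
    (A - vecMulVec v v).IsSymm := by
  rw [IsSymm, transpose_sub, transpose_vecMulVec, hA.eq]

theorem IsSymm.sub_vecMulVec_sub_vecMulVec (hA : A.IsSymm) (a b : n → R) :
    (A - vecMulVec a b - vecMulVec b a).IsSymm := by
  rw [IsSymm, transpose_sub, transpose_sub, transpose_vecMulVec, transpose_vecMulVec, hA.eq,
    sub_right_comm]

end IsSymm

section Rank

variable [Field K] [Fintype n]

theorem eq_zero_of_rank_eq_zero {A : Matrix m n K} (h : A.rank = 0) : A = 0 := by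
  classical
  have hrange : range A.mulVecLin = ⊥ := Submodule.finrank_eq_zero.mp h
  ext i j
  have hcol : A.col j ∈ range A.mulVecLin := ⟨Pi.single j 1, mulVec_single_one A j⟩
  rw [hrange, Submodule.mem_bot] at hcol
  exact congrFun hcol i

theorem notMem_range_mulVecLin_of_row_eq_zero {B : Matrix m n K} {i : m} (hB : B.row i = 0)
    {v : m → K} (hv : v i ≠ 0) : v ∉ range B.mulVecLin := by
  rintro ⟨x, rfl⟩
  exact hv (by simp [mulVec, ← row_apply, hB])

theorem rank_add_vecMulVec [Fintype m] {B : Matrix m n K} {v : m → K} {w : n → K}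
    (hv : v ∈ range (B + vecMulVec v w).mulVecLin) (hvB : v ∉ range B.mulVecLin) :
    (B + vecMulVec v w).rank = B.rank + 1 := by
  have hmulVec (x : n → K) : (B + vecMulVec v w) *ᵥ x = B *ᵥ x + (w ⬝ᵥ x) • v := by
    rw [add_mulVec, vecMulVec_mulVec, op_smul_eq_smul]
  have hrange : range (B + vecMulVec v w).mulVecLin = range B.mulVecLin ⊔ span K {v} := by
    apply le_antisymm
    · rintro _ ⟨x, rfl⟩
      rw [mulVecLin_apply, hmulVec]
      exact add_mem_sup ⟨x, rfl⟩ (smul_mem _ _ (mem_span_singleton_self v))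
    · refine sup_le ?_ (span_le.mpr (Set.singleton_subset_iff.mpr hv))
      rintro _ ⟨x, rfl⟩
      rw [mulVecLin_apply, ← add_sub_cancel_right (B *ᵥ x) ((w ⬝ᵥ x) • v), ← hmulVec]
      exact sub_mem ⟨x, rfl⟩ (smul_mem _ _ hv)
  rw [rank, rank, hrange, finrank_sup_span_singleton hvB]

theorem rank_le_rank_of_eq_mul_transpose [Fintype m] {A : Matrix m m K} {X : Matrix m n K}
    (hX : A = X * Xᵀ) : A.rank ≤ X.rank :=
  hX ▸ rank_mul_le_left X Xᵀ

theorem rank_lt_card_width_of_mulVec_eq_zero {X : Matrix m n K} {x : n → K} (hx : x ≠ 0)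
    (h : X *ᵥ x = 0) : X.rank < Fintype.card n := by
  have hker : ker X.mulVecLin ≠ ⊥ := fun hbot =>
    hx ((Submodule.mem_bot K).mp (hbot ▸ (LinearMap.mem_ker.mpr h)))
  have hsum := finrank_range_add_finrank_ker X.mulVecLin
  rw [Module.finrank_fintype_fun_eq_card] at hsum
  have hpos := Submodule.finrank_eq_zero.not.mpr hker
  rw [rank]
  omega

end Rank

section Gram

variable [CommRing R] [Fintype n]

def consCol {r : ℕ} (v : m → R) (X : Matrix m (Fin r) R) : Matrix m (Fin (r + 1)) R :=
  of fun i => Fin.cons (v i) (X i)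

theorem consCol_mul_transpose {r : ℕ} (v : m → R) (X : Matrix m (Fin r) R) :
    consCol v X * (consCol v X)ᵀ = vecMulVec v v + X * Xᵀ := by
  ext i j
  simp [consCol, mul_apply, Fin.sum_univ_succ, vecMulVec_apply]

theorem add_vecMulVec_one_mul_transpose {X : Matrix m n R} (hX : X *ᵥ 1 = 0) (v : m → R) :
    (X + vecMulVec v 1) * (X + vecMulVec v 1)ᵀ =
      X * Xᵀ + (Fintype.card n : R) • vecMulVec v v := by
  rw [transpose_add, transpose_vecMulVec, Matrix.add_mul, Matrix.mul_add, Matrix.mul_add,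
    mul_vecMulVec, hX, vecMulVec_mul, vecMul_transpose, hX, vecMulVec_mul_vecMulVec]
  simp [dotProduct]

end Gram

section SymmetricElimination

variable [Field K] [Fintype n] {A : Matrix n n K}

theorem IsSymm.rank_sub_vecMulVec_col_add_one (hA : A.IsSymm) {i : n} (hii : A i i = 1) :
    (A - vecMulVec (A.col i) (A.col i)).rank + 1 = A.rank := by
  classical
  have hrow : (A - vecMulVec (A.col i) (A.col i)).row i = 0 := by
    ext l
    simp [vecMulVec_apply, hii, hA.apply l i]
  have h := rank_add_vecMulVec (w := A.col i)
    (by rw [sub_add_cancel]; exact ⟨Pi.single i 1, mulVec_single_one A i⟩)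
    (notMem_range_mulVecLin_of_row_eq_zero hrow (by simp [hii]))
  rwa [sub_add_cancel, eq_comm] at h

theorem IsSymm.rank_sub_vecMulVec_col_sub_vecMulVec_col_add_two (hA : A.IsSymm) {i j : n}
    (hii : A i i = 0) (hjj : A j j = 0) (hij : A i j = 1) :
    (A - vecMulVec (A.col i) (A.col j) - vecMulVec (A.col j) (A.col i)).rank + 2 = A.rank := by
  classical
  have hji : A j i = 1 := by rw [hA.apply i j, hij]
  set B := A - vecMulVec (A.col j) (A.col i)
  have hBrow : B.row i = 0 := by
    ext l
    simp [B, vecMulVec_apply, hij, hA.apply l i]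
  have hBcol : B *ᵥ Pi.single i 1 = A.col i := by
    ext l
    simp [B, vecMulVec_apply, hii]
  have hA'row : (B - vecMulVec (A.col i) (A.col j)).row j = 0 := by
    ext l
    simp [B, vecMulVec_apply, hji, hjj, hA.apply l j]
  have hrankB := rank_add_vecMulVec (B := B) (w := A.col i)
    (by rw [sub_add_cancel]; exact ⟨Pi.single j 1, mulVec_single_one A j⟩)
    (notMem_range_mulVecLin_of_row_eq_zero hBrow (by simp [hij]))
  have hrankA' := rank_add_vecMulVec (B := B - vecMulVec (A.col i) (A.col j)) (w := A.col j)
    (by rw [sub_add_cancel]; exact ⟨Pi.single i 1, hBcol⟩)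
    (notMem_range_mulVecLin_of_row_eq_zero hA'row (by simp [hji]))
  rw [sub_add_cancel] at hrankB hrankA'
  rw [sub_right_comm]
  change (B - vecMulVec (A.col i) (A.col j)).rank + 2 = A.rank
  omega

end SymmetricElimination

section ZModTwo

variable [Fintype n]

theorem diag_mul_transpose_self_eq_mulVec_one (X : Matrix m n (ZMod 2)) :
    (X * Xᵀ).diag = X *ᵥ 1 := by
  ext i
  simp [mul_apply, mulVec, dotProduct, ← sq, ZMod.pow_card]

theorem mulVec_one_eq_zero_of_eq_mul_transpose {A : Matrix m m (ZMod 2)}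
    {X : Matrix m n (ZMod 2)} (hX : A = X * Xᵀ) (hdiag : A.diag = 0) : X *ᵥ 1 = 0 := by
  rw [← diag_mul_transpose_self_eq_mulVec_one, ← hX, hdiag]

theorem IsSymm.exists_mul_transpose_of_diag_eq_zero {A : Matrix n n (ZMod 2)} (hA : A.IsSymm)
    (hdiag : A.diag = 0) :
    Even A.rank ∧ ∃ X : Matrix n (Fin (A.rank + 1)) (ZMod 2), A = X * Xᵀ := by
  suffices ∀ k, A.rank = k → Even k ∧ ∃ X : Matrix n (Fin (k + 1)) (ZMod 2), A = X * Xᵀ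
    from this _ rfl
  intro k hk
  induction k using Nat.strong_induction_on generalizing A with
  | _ k ih =>
  by_cases hA0 : A = 0
  · subst hA0
    rw [rank_zero] at hk
    subst hk
    exact ⟨Even.zero, 0, by simp⟩
  obtain ⟨i, j, hij⟩ : ∃ i j, A i j ≠ 0 := by
    by_contra! h
    exact hA0 (Matrix.ext h)
  replace hij : A i j = 1 := ZMod.eq_one_of_ne_zero hij
  set a := A.col i
  set b := A.col j
  set A' := A - vecMulVec a b - vecMulVec b a
  have hA'diag : A'.diag = 0 := by
    ext l
    have hll : A l l = 0 := congrFun hdiag l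
    simp only [A', diag_apply, sub_apply, vecMulVec_apply, hll, Pi.zero_apply]
    linear_combination (-(a l * b l)) * CharTwo.two_eq_zero (R := ZMod 2)
  have hrank : A'.rank + 2 = A.rank :=
    hA.rank_sub_vecMulVec_col_sub_vecMulVec_col_add_two (congrFun hdiag i) (congrFun hdiag j) hij
  obtain ⟨hA'even, X', hX'⟩ :=
    ih A'.rank (by omega) (hA.sub_vecMulVec_sub_vecMulVec a b) hA'diag rfl
  have hX'1 := mulVec_one_eq_zero_of_eq_mul_transpose hX' hA'diag
  obtain rfl : k = A'.rank + 2 := by omega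
  -- `X Xᵀ = a aᵀ + b bᵀ + A' + (a + b)(a + b)ᵀ`, i.e. `A' + a bᵀ + b aᵀ` over `F₂`
  refine ⟨hA'even.add even_two, consCol a (consCol b (X' + vecMulVec (a + b) 1)), ?_⟩
  rw [consCol_mul_transpose, consCol_mul_transpose, add_vecMulVec_one_mul_transpose hX'1,
    ← hX', Fintype.card_fin, ZMod.natCast_eq_one_iff_odd.mpr hA'even.add_one, one_smul]
  ext l l'
  simp only [add_apply, sub_apply, vecMulVec_apply, Pi.add_apply]
  linear_combination (-(a l * a l' + b l * b l')) * CharTwo.two_eq_zero (R := ZMod 2)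

theorem IsSymm.exists_mul_transpose_of_diag_ne_zero {A : Matrix n n (ZMod 2)} (hA : A.IsSymm)
    (hdiag : A.diag ≠ 0) : ∃ X : Matrix n (Fin A.rank) (ZMod 2), A = X * Xᵀ := by
  suffices ∀ k, A.rank = k → ∃ X : Matrix n (Fin k) (ZMod 2), A = X * Xᵀ from this _ rfl
  intro k hk
  induction k generalizing A with
  | zero => exact absurd (by rw [eq_zero_of_rank_eq_zero hk, diag_zero]) hdiag
  | succ r ih =>
  obtain ⟨i, hi⟩ : ∃ i, A i i ≠ 0 := by
    by_contra! h
    exact hdiag (funext h)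
  have hii : A i i = 1 := ZMod.eq_one_of_ne_zero hi
  set v := A.col i
  set A' := A - vecMulVec v v
  have hrank : A'.rank + 1 = A.rank := hA.rank_sub_vecMulVec_col_add_one hii
  obtain rfl : r = A'.rank := by omega
  by_cases hA'diag : A'.diag = 0
  · obtain ⟨hA'even, X', hX'⟩ :=
      (hA.sub_vecMulVec_self v).exists_mul_transpose_of_diag_eq_zero hA'diag
    have hX'1 := mulVec_one_eq_zero_of_eq_mul_transpose hX' hA'diag
    refine ⟨X' + vecMulVec v 1, ?_⟩
    rw [add_vecMulVec_one_mul_transpose hX'1, ← hX', Fintype.card_fin,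
      ZMod.natCast_eq_one_iff_odd.mpr hA'even.add_one, one_smul, sub_add_cancel]
  · obtain ⟨X', hX'⟩ := ih (hA.sub_vecMulVec_self v) hA'diag rfl
    refine ⟨consCol v X', ?_⟩
    rw [consCol_mul_transpose, ← hX', add_sub_cancel]

end ZModTwo

end Matrix

/-- Any symmetric `n × n` matrix over `F₂` of rank `k` factors as `X * Xᵀ` where
`X` has rank `k` and either `k` columns, or `k + 1` columns with `k` even. -/
theorem symm_matrix_factorization {n k : ℕ}
    (A : Matrix (Fin n) (Fin n) (ZMod 2)) (hA : A.IsSymm) (hk : A.rank = k) :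
    (∃ X : Matrix (Fin n) (Fin k) (ZMod 2), X.rank = k ∧ A = X * X.transpose) ∨
    (∃ X : Matrix (Fin n) (Fin (k + 1)) (ZMod 2),
      X.rank = k ∧ A = X * X.transpose ∧ Even k) := by
  subst hk
  by_cases hdiag : A.diag = 0
  · obtain ⟨hk, X, hX⟩ := hA.exists_mul_transpose_of_diag_eq_zero hdiag
    have hle : X.rank ≤ A.rank := by
      simpa using rank_lt_card_width_of_mulVec_eq_zero one_ne_zero
        (mulVec_one_eq_zero_of_eq_mul_transpose hX hdiag)
    exact Or.inr ⟨X, hle.antisymm (rank_le_rank_of_eq_mul_transpose hX), hX, hk⟩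
  · obtain ⟨X, hX⟩ := hA.exists_mul_transpose_of_diag_ne_zero hdiag
    exact Or.inl ⟨X, (rank_le_width X).antisymm (rank_le_rank_of_eq_mul_transpose hX), hX⟩
end

section
/- Let A be an n×n symmetric matrix over F_2 of rank k with all diagonal entries equal to 0. Then k is even and there exists an n×(k+1) matrix X over F_2 of rank k with A = X·Xᵀ, such that every row of X has an even number of ones (equivalently, each row y of X satisfies y·y = 0). -/
/-!
Pick `A i j = 1` and let `a`, `b` be the columns `i`, `j` of `A`. The symmetric matrix
`A' = A - a bᵀ - b aᵀ` vanishes on the rows `i`, `j` and its range is complementary to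
`span {a, b}` inside the range of `A`, so `rank A' = rank A - 2`; by induction `rank A` is even
and `A' = X' X'ᵀ` with `X'` having `rank A' + 1` columns.

Over `F₂` we have `y ⬝ᵥ y = y ⬝ᵥ 𝟙`, so the zero diagonal of `X' X'ᵀ` says `X' 𝟙 = 0`. Since the
number of columns is odd, `𝟙 ⬝ᵥ 𝟙 = 1` and `X' + b 𝟙ᵀ` has Gram matrix `X' X'ᵀ + b bᵀ`;
prepending the columns `a + b` and `a` gives `A`, because
`(a + b)(a + b)ᵀ + a aᵀ + b bᵀ = a bᵀ + b aᵀ` in characteristic two.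

For the final `X` with `k + 1` columns, `k = rank (X Xᵀ) ≤ rank X`, and `X 𝟙 = 0` forces
`rank X ≤ k`.
-/

open Matrix Module

theorem ZMod.dotProduct_self_eq_dotProduct_one {κ : Type*} [Fintype κ] (x : κ → ZMod 2) :
    x ⬝ᵥ x = x ⬝ᵥ 1 :=
  Finset.sum_congr rfl fun k _ => by
    rw [Pi.one_apply, mul_one]
    exact (by decide : ∀ t : ZMod 2, t * t = t) (x k)

namespace Matrix

variable {ι κ K R : Type*}

theorem rank_lt_card_width_of_mulVec_eq_zero_s3 [Field K] [Fintype κ] (X : Matrix ι κ K)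
    {v : κ → K} (hv : v ≠ 0) (hXv : X *ᵥ v = 0) : X.rank < Fintype.card κ := by
  have hsum := LinearMap.finrank_range_add_finrank_ker X.mulVecLin
  have hker : 0 < finrank K (LinearMap.ker X.mulVecLin) :=
    finrank_pos_iff_exists_ne_zero.2 ⟨⟨v, hXv⟩, fun h => hv (congrArg Subtype.val h)⟩
  rw [finrank_fintype_fun_eq_card] at hsum
  unfold Matrix.rank
  omega

theorem mulVec_one_eq_zero_of_dotProduct_self_eq_zero [Fintype κ] (X : Matrix ι κ (ZMod 2))
    (h : ∀ i, X i ⬝ᵥ X i = 0) : X *ᵥ 1 = 0 :=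
  funext fun i => (ZMod.dotProduct_self_eq_dotProduct_one (X i)).symm.trans (h i)

/-- When `A i i = A j j = 0` and `A i j = A j i = 1`, this is the Schur complement of the block
`!![0, 1; 1, 0]` of `A` at the rows and columns `i`, `j`. -/
def hyperbolicReduction [Ring R] (A : Matrix ι ι R) (i j : ι) : Matrix ι ι R :=
  A - vecMulVec (A.col i) (A.col j) - vecMulVec (A.col j) (A.col i)

section hyperbolicReduction

variable [CommRing R] {A : Matrix ι ι R} {i j : ι}

theorem IsSymm.hyperbolicReduction (hA : A.IsSymm) : (A.hyperbolicReduction i j).IsSymm := by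
  simp only [Matrix.hyperbolicReduction, IsSymm, transpose_sub, transpose_vecMulVec, hA.eq]
  abel

theorem hyperbolicReduction_apply_self [CharP R 2] (r : ι) :
    A.hyperbolicReduction i j r r = A r r := by
  simp [Matrix.hyperbolicReduction, vecMulVec_apply, mul_comm (A r j), CharTwo.sub_eq_add,
    add_assoc, CharTwo.add_self_eq_zero]

variable [Fintype ι]

theorem hyperbolicReduction_mulVec (hA : A.IsSymm) (x : ι → R) :
    A.hyperbolicReduction i j *ᵥ x = A *ᵥ x - (A *ᵥ x) j • A.col i - (A *ᵥ x) i • A.col j := by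
  have hcol : ∀ k, A.col k ⬝ᵥ x = (A *ᵥ x) k := fun k => by
    change Aᵀ k ⬝ᵥ x = _
    rw [hA.eq]
    rfl
  simp only [Matrix.hyperbolicReduction, sub_mulVec, vecMulVec_mulVec, hcol, op_smul_eq_smul]

theorem hyperbolicReduction_mulVec_apply_left (hA : A.IsSymm) (hi : A i i = 0) (hij : A i j = 1)
    (x : ι → R) : (A.hyperbolicReduction i j *ᵥ x) i = 0 := by
  simp [hyperbolicReduction_mulVec hA, hi, hij]

theorem hyperbolicReduction_mulVec_apply_right (hA : A.IsSymm) (hj : A j j = 0)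
    (hij : A i j = 1) (x : ι → R) : (A.hyperbolicReduction i j *ᵥ x) j = 0 := by
  simp [hyperbolicReduction_mulVec hA, hj, hA.apply i j ▸ hij]

theorem range_mulVecLin_eq_range_hyperbolicReduction_sup_span (hA : A.IsSymm) :
    LinearMap.range A.mulVecLin =
      LinearMap.range (A.hyperbolicReduction i j).mulVecLin ⊔
        Submodule.span R {A.col i, A.col j} := by
  classical
  have hcol : ∀ k, A.col k ∈ LinearMap.range A.mulVecLin := fun k =>
    ⟨Pi.single k 1, mulVec_single_one A k⟩
  refine le_antisymm ?_ (sup_le ?_ ?_)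
  · rintro _ ⟨x, rfl⟩
    have hx : A *ᵥ x =
        A.hyperbolicReduction i j *ᵥ x + ((A *ᵥ x) j • A.col i + (A *ᵥ x) i • A.col j) := by
      rw [hyperbolicReduction_mulVec hA]
      abel
    rw [mulVecLin_apply, hx]
    exact Submodule.add_mem_sup ⟨x, rfl⟩ (Submodule.mem_span_pair.2 ⟨_, _, rfl⟩)
  · rintro _ ⟨x, rfl⟩
    rw [mulVecLin_apply, hyperbolicReduction_mulVec hA]
    exact sub_mem (sub_mem ⟨x, rfl⟩ (Submodule.smul_mem _ _ (hcol i)))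
      (Submodule.smul_mem _ _ (hcol j))
  · exact Submodule.span_le.2 (Set.insert_subset (hcol i) (Set.singleton_subset_iff.2 (hcol j)))

end hyperbolicReduction

theorem rank_hyperbolicReduction_add_two [Fintype ι] [Field K] {A : Matrix ι ι K} {i j : ι}
    (hA : A.IsSymm) (hi : A i i = 0) (hj : A j j = 0) (hij : A i j = 1) :
    (A.hyperbolicReduction i j).rank + 2 = A.rank := by
  set V := LinearMap.range (A.hyperbolicReduction i j).mulVecLin
  set S := Submodule.span K {A.col i, A.col j}
  have hcoord : ∀ s t : K, (s • A.col i + t • A.col j) i = t ∧ (s • A.col i + t • A.col j) j = s :=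
    fun s t => by simp [hi, hj, hij, hA.apply i j ▸ hij]
  have hindep : LinearIndependent K ![A.col i, A.col j] :=
    LinearIndependent.pair_iff.2 fun s t hst => by
      obtain ⟨ht, hs⟩ := hcoord s t
      rw [hst] at ht hs
      exact ⟨hs.symm, ht.symm⟩
  have hS : finrank K S = 2 := by
    have h := finrank_span_eq_card hindep
    rwa [range_cons_cons_empty, Fintype.card_fin] at h
  have hdisj : V ⊓ S = ⊥ := by
    refine eq_bot_iff.2 ?_
    rintro _ ⟨⟨x, rfl⟩, hx⟩
    obtain ⟨s, t, hst⟩ := Submodule.mem_span_pair.1 hx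
    obtain ⟨ht, hs⟩ := hcoord s t
    rw [hst] at ht hs
    rw [Submodule.mem_bot, ← hst, ht.symm.trans (hyperbolicReduction_mulVec_apply_left hA hi hij x),
      hs.symm.trans (hyperbolicReduction_mulVec_apply_right hA hj hij x), zero_smul, zero_smul,
      add_zero]
  have hdim := Submodule.finrank_sup_add_finrank_inf_eq V S
  rw [← range_mulVecLin_eq_range_hyperbolicReduction_sup_span hA, hdisj, finrank_bot, add_zero,
    hS] at hdim
  exact hdim.symm

theorem exists_mul_transpose_eq_add_vecMulVec {c : ℕ} (X : Matrix ι (Fin c) (ZMod 2))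
    (hX : X *ᵥ 1 = 0) (hc : Odd c) (a b : ι → ZMod 2) :
    ∃ Y : Matrix ι (Fin (c + 2)) (ZMod 2), Y * Yᵀ = X * Xᵀ + vecMulVec a b + vecMulVec b a := by
  have hrow : ∀ r, X r ⬝ᵥ 1 = 0 := fun r => congrFun hX r
  have hone : (1 : Fin c → ZMod 2) ⬝ᵥ 1 = 1 := by
    simpa using ZMod.natCast_eq_one_iff_odd.2 hc
  refine ⟨of fun r => vecCons (a r + b r) (vecCons (a r) (X r + b r • 1)), ?_⟩
  ext r s
  change vecCons _ _ ⬝ᵥ vecCons _ _ = _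
  simp only [cons_dotProduct_cons, add_dotProduct, dotProduct_add, smul_dotProduct,
    dotProduct_smul, hrow, dotProduct_comm 1, hone, smul_eq_mul, mul_zero, mul_one, add_zero,
    zero_add, add_apply, vecMulVec_apply]
  rw [show (X * Xᵀ) r s = X r ⬝ᵥ X s from rfl]
  linear_combination (a r * a s + b r * b s) * CharTwo.two_eq_zero (R := ZMod 2)

theorem IsSymm.even_rank_and_exists_eq_mul_transpose [Fintype ι] {A : Matrix ι ι (ZMod 2)}
    (hA : A.IsSymm) (hdiag : ∀ i, A i i = 0) :
    Even A.rank ∧ ∃ X : Matrix ι (Fin (A.rank + 1)) (ZMod 2), A = X * Xᵀ := by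
  induction hr : A.rank using Nat.strong_induction_on generalizing A with
  | _ r ih =>
  by_cases hA0 : A = 0
  · subst hA0
    rw [rank_zero] at hr
    subst hr
    exact ⟨⟨0, rfl⟩, 0, by simp⟩
  obtain ⟨i, j, hij⟩ : ∃ i j, A i j ≠ 0 := by
    by_contra! h
    exact hA0 (Matrix.ext h)
  replace hij : A i j = 1 := (by decide : ∀ t : ZMod 2, t ≠ 0 → t = 1) _ hij
  set A' := A.hyperbolicReduction i j
  have hdiag' : ∀ r, A' r r = 0 := fun r => (hyperbolicReduction_apply_self r).trans (hdiag r)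
  have hrank : A'.rank + 2 = A.rank := rank_hyperbolicReduction_add_two hA (hdiag i) (hdiag j) hij
  obtain ⟨heven, X', hX'⟩ := ih A'.rank (by omega) hA.hyperbolicReduction hdiag' rfl
  have hX'1 : X' *ᵥ 1 = 0 := mulVec_one_eq_zero_of_dotProduct_self_eq_zero X' fun r =>
    (congrFun₂ hX' r r).symm.trans (hdiag' r)
  obtain ⟨Y, hY⟩ := exists_mul_transpose_eq_add_vecMulVec X' hX'1 heven.add_one (A.col i) (A.col j)
  rw [← hr, ← hrank]
  refine ⟨heven.add even_two, Y, ?_⟩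
  rw [hY, ← hX', Matrix.hyperbolicReduction]
  abel

end Matrix

/-- A symmetric `n × n` matrix over `F₂` of rank `k` with zero diagonal has `k`
even, and factors as `X * Xᵀ` where `X` is `n × (k+1)` of rank `k` and every row
`y` of `X` satisfies `y · y = 0`. -/
theorem symm_matrix_zero_diag_factorization {n k : ℕ}
    (A : Matrix (Fin n) (Fin n) (ZMod 2)) (hA : A.IsSymm) (hk : A.rank = k)
    (hdiag : ∀ i, A i i = 0) :
    Even k ∧ ∃ X : Matrix (Fin n) (Fin (k + 1)) (ZMod 2),
      X.rank = k ∧ A = X * X.transpose ∧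
      ∀ i, dotProduct (X i) (X i) = 0 := by
  subst hk
  obtain ⟨heven, X, hX⟩ := hA.even_rank_and_exists_eq_mul_transpose hdiag
  have hrows : ∀ i, X i ⬝ᵥ X i = 0 := fun i => (congrFun₂ hX i i).symm.trans (hdiag i)
  have hX1 : X *ᵥ 1 = 0 := X.mulVec_one_eq_zero_of_dotProduct_self_eq_zero hrows
  refine ⟨heven, X, le_antisymm ?_ ?_, hX, hrows⟩
  · simpa [Nat.lt_succ_iff] using X.rank_lt_card_width_of_mulVec_eq_zero_s3 one_ne_zero hX1
  · calc A.rank = (X * Xᵀ).rank := by rw [← hX]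
      _ ≤ X.rank := Matrix.rank_mul_le_left _ _
end

section
/- For every oriented graph D there exists a tournament D* on the same vertex set containing D as a subgraph with inv(D*) = inv(D). -/
/-- A (simple) oriented graph: no loops, at most one arc between two vertices. -/
structure OGraph (V : Type) where
  adj : V → V → Prop
  loopless : ∀ v, ¬ adj v v
  asymm : ∀ u v, adj u v → ¬ adj v u

namespace OGraph

variable {V V₁ V₂ V₃ : Type}

/-- Inversion of a set `X`: reverse every arc with both ends in `X`. -/
def invert (D : OGraph V) (X : Set V) : OGraph V where
  adj u v := (u ∈ X ∧ v ∈ X ∧ D.adj v u) ∨ ((u ∉ X ∨ v ∉ X) ∧ D.adj u v)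
  loopless := by
    intro v h
    rcases h with ⟨_, _, h⟩ | ⟨_, h⟩ <;> exact D.loopless v h
  asymm := by
    rintro u v (⟨hu, hv, h⟩ | ⟨h1, h⟩) (⟨hv', hu', h'⟩ | ⟨h2, h'⟩)
    · exact D.asymm u v h' h
    · rcases h2 with h2 | h2
      · exact h2 hv
      · exact h2 hu
    · rcases h1 with h1 | h1
      · exact h1 hu'
      · exact h1 hv'
    · exact D.asymm u v h h'

/-- Successively invert each set of a list. -/
def invertList (D : OGraph V) (L : List (Set V)) : OGraph V :=
  L.foldl invert D

/-- An oriented graph is acyclic if it has no directed cycle. -/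
def Acyclic (D : OGraph V) : Prop :=
  ∀ v, ¬ Relation.TransGen D.adj v v

/-- The inversion number: the least length of a decycling family. -/
noncomputable def inv (D : OGraph V) : ℕ :=
  sInf {m | ∃ L : List (Set V), L.length = m ∧ (D.invertList L).Acyclic}

/-- A tournament has exactly one arc between any two distinct vertices. -/
def IsTournament (D : OGraph V) : Prop :=
  ∀ u v, u ≠ v → D.adj u v ∨ D.adj v u

/-- Reversing every arc. -/
def reverse (D : OGraph V) : OGraph V where
  adj u v := D.adj v u
  loopless v h := D.loopless v h
  asymm u v h h2 := D.asymm u v h2 h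

/-- The dijoin `D₁ → D₂`: disjoint union plus all arcs from `D₁` to `D₂`. -/
def dijoin (D₁ : OGraph V₁) (D₂ : OGraph V₂) : OGraph (V₁ ⊕ V₂) where
  adj x y :=
    match x, y with
    | .inl u, .inl v => D₁.adj u v
    | .inr u, .inr v => D₂.adj u v
    | .inl _, .inr _ => True
    | .inr _, .inl _ => False
  loopless := by
    rintro (v | v) h
    · exact D₁.loopless v h
    · exact D₂.loopless v h
  asymm := by
    rintro (u | u) (v | v) h h'
    · exact D₁.asymm u v h h'
    · exact h'
    · exact h
    · exact D₂.asymm u v h h'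

/-- `M` is a decycling matrix for `D`: a symmetric `F₂`-matrix such that reversing
all arcs `uv` with `M u v = 1` yields an acyclic oriented graph. -/
def IsDecyclingMatrix (D : OGraph V) (M : Matrix V V (ZMod 2)) : Prop :=
  M.IsSymm ∧
    ∀ v, ¬ Relation.TransGen
      (fun u w => (M u w = 1 ∧ D.adj w u) ∨ (M u w ≠ 1 ∧ D.adj u w)) v v

/-- The tournament minimum rank: the least rank of a decycling matrix. -/
noncomputable def tmr [Fintype V] (D : OGraph V) : ℕ :=
  sInf {r | ∃ M : Matrix V V (ZMod 2), D.IsDecyclingMatrix M ∧ M.rank = r}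

end OGraph

/-!
Let `L` be a shortest family of inversions making `D` acyclic. Extend the acyclic graph
`D.invertList L` to a transitive tournament `E` and undo the inversions: since each inversion
is an involution, `T := E.invertList L.reverse` is a tournament containing `D`, and `L` turns
it back into `E`, so `inv T ≤ inv D`. Conversely inversions preserve subgraphs and subgraphs
of acyclic graphs are acyclic, so every decycling family of `T` decycles `D`.
-/

namespace OGraph

variable {V : Type}

instance : LE (OGraph V) := ⟨fun D E => ∀ u v, D.adj u v → E.adj u v⟩

lemma ext {D E : OGraph V} (h : ∀ u v, D.adj u v ↔ E.adj u v) : D = E := by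
  obtain ⟨adj, _, _⟩ := D
  obtain ⟨adj', _, _⟩ := E
  obtain rfl : adj = adj' := funext₂ fun u v => propext (h u v)
  rfl

lemma invert_invert (D : OGraph V) (X : Set V) : (D.invert X).invert X = D := by
  refine ext fun u v => ?_
  simp only [invert]
  by_cases hu : u ∈ X <;> by_cases hv : v ∈ X <;> simp [hu, hv]

lemma invertList_append (D : OGraph V) (L M : List (Set V)) :
    D.invertList (L ++ M) = (D.invertList L).invertList M :=
  List.foldl_append ..

lemma invertList_invertList_reverse (D : OGraph V) (L : List (Set V)) :
    (D.invertList L).invertList L.reverse = D := by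
  induction L generalizing D with
  | nil => rfl
  | cons X L ih =>
    rw [List.reverse_cons, invertList_append]
    exact congrArg (invert · X) (ih (D.invert X)) |>.trans (invert_invert D X)

lemma invert_mono {D E : OGraph V} (h : D ≤ E) (X : Set V) : D.invert X ≤ E.invert X := by
  rintro u v (⟨hu, hv, hvu⟩ | ⟨hX, huv⟩)
  · exact Or.inl ⟨hu, hv, h v u hvu⟩
  · exact Or.inr ⟨hX, h u v huv⟩

lemma invertList_mono {D E : OGraph V} (h : D ≤ E) (L : List (Set V)) :
    D.invertList L ≤ E.invertList L := by
  induction L generalizing D E with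
  | nil => exact h
  | cons X L ih => exact ih (invert_mono h X)

lemma Acyclic.anti {D E : OGraph V} (h : D ≤ E) (hE : E.Acyclic) : D.Acyclic :=
  fun v hv => hE v (Relation.TransGen.mono h v v hv)

lemma IsTournament.invert {D : OGraph V} (hD : D.IsTournament) (X : Set V) :
    (D.invert X).IsTournament := by
  intro u v huv
  by_cases hX : u ∈ X ∧ v ∈ X
  · rcases hD u v huv with h | h
    · exact Or.inr (Or.inl ⟨hX.2, hX.1, h⟩)
    · exact Or.inl (Or.inl ⟨hX.1, hX.2, h⟩)
  · rw [not_and_or] at hX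
    rcases hD u v huv with h | h
    · exact Or.inl (Or.inr ⟨hX, h⟩)
    · exact Or.inr (Or.inr ⟨hX.symm, h⟩)

lemma IsTournament.invertList {D : OGraph V} (hD : D.IsTournament) (L : List (Set V)) :
    (D.invertList L).IsTournament := by
  induction L generalizing D with
  | nil => exact hD
  | cons X L ih => exact ih (hD.invert X)

lemma acyclic_of_adj_lt [Preorder V] {D : OGraph V} (h : ∀ u v, D.adj u v → u < v) :
    D.Acyclic :=
  fun v hv => lt_irrefl v <|
    (Relation.transGen_eq_self (r := (· < ·))).le v v (Relation.TransGen.mono h v v hv)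

def ofLinearOrder (V : Type) [LinearOrder V] : OGraph V where
  adj := (· < ·)
  loopless := lt_irrefl
  asymm _ _ := lt_asymm

lemma isTournament_ofLinearOrder [LinearOrder V] : (ofLinearOrder V).IsTournament :=
  fun _ _ => lt_or_gt_of_ne

lemma acyclic_ofLinearOrder [LinearOrder V] : (ofLinearOrder V).Acyclic :=
  acyclic_of_adj_lt fun _ _ => id

lemma Acyclic.exists_linearOrder {D : OGraph V} (hD : D.Acyclic) :
    ∃ _ : LinearOrder V, ∀ u v, D.adj u v → u < v := by
  let reachability : PartialOrder V :=
    { le := Relation.ReflTransGen D.adj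
      le_refl _ := .refl
      le_trans _ _ _ := .trans
      le_antisymm u v huv hvu := by
        rcases Relation.reflTransGen_iff_eq_or_transGen.mp huv with h | huv
        · exact h.symm
        rcases Relation.reflTransGen_iff_eq_or_transGen.mp hvu with h | hvu
        · exact h
        exact (hD u (huv.trans hvu)).elim }
  -- `LinearExtension V` is a synonym of `V`: a linear extension of reachability orders `V` itself.
  refine ⟨(inferInstance : LinearOrder (LinearExtension V)), fun u v huv => ?_⟩
  have hle : toLinearExtension u ≤ toLinearExtension v :=
    toLinearExtension.monotone (Relation.ReflTransGen.single huv)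
  exact lt_of_le_of_ne hle fun h => D.loopless u (by rwa [← show u = v from h] at huv)

lemma Acyclic.exists_tournament_le {D : OGraph V} (hD : D.Acyclic) :
    ∃ E : OGraph V, E.IsTournament ∧ D ≤ E ∧ E.Acyclic := by
  obtain ⟨_, h⟩ := hD.exists_linearOrder
  exact ⟨ofLinearOrder V, isTournament_ofLinearOrder, h, acyclic_ofLinearOrder⟩

lemma adj_invert_pair {D : OGraph V} {u v a b : V} (huv : D.adj u v)
    (h : (D.invert {u, v}).adj a b) : a = v ∧ b = u ∨ D.adj a b ∧ (a, b) ≠ (u, v) := by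
  rcases h with ⟨ha, hb, hba⟩ | ⟨hab, h⟩
  · rcases ha with rfl | rfl <;> rcases hb with rfl | rfl
    · exact (D.loopless _ hba).elim
    · exact (D.asymm _ _ huv hba).elim
    · exact Or.inl ⟨rfl, rfl⟩
    · exact (D.loopless _ hba).elim
  · refine Or.inr ⟨h, ?_⟩
    rintro ⟨rfl, rfl⟩
    simp at hab

/-- Inverting `{u, v}` reverses only the arc `uv`, so one such inversion per backward arc
leaves only forward arcs. -/
lemma exists_invertList_acyclic_of_backward_subset [LinearOrder V] (S : Finset (V × V)) :
    ∀ D : OGraph V, (∀ u v, D.adj u v → v < u → (u, v) ∈ S) →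
      ∃ L : List (Set V), (D.invertList L).Acyclic := by
  induction S using Finset.induction_on with
  | empty =>
    refine fun D hD => ⟨[], acyclic_of_adj_lt fun u v huv => ?_⟩
    refine lt_of_le_of_ne (not_lt.mp fun hvu => ?_) fun h => D.loopless u (h ▸ huv)
    simpa using hD u v huv hvu
  | insert p S _ ih =>
    intro D hD
    by_cases hp : D.adj p.1 p.2 ∧ p.2 < p.1
    · have hback : ∀ a b, (D.invert {p.1, p.2}).adj a b → b < a → (a, b) ∈ S := by
        intro a b hab hba
        rcases adj_invert_pair hp.1 hab with ⟨rfl, rfl⟩ | ⟨hab, hne⟩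
        · exact absurd hp.2 (lt_asymm hba)
        · exact (Finset.mem_insert.mp (hD a b hab hba)).resolve_left hne
      obtain ⟨L, hL⟩ := ih _ hback
      exact ⟨{p.1, p.2} :: L, hL⟩
    · refine ih D fun a b hab hba => (Finset.mem_insert.mp (hD a b hab hba)).resolve_left ?_
      rintro rfl
      exact hp ⟨hab, hba⟩

lemma exists_invertList_acyclic [Finite V] (D : OGraph V) :
    ∃ L : List (Set V), (D.invertList L).Acyclic := by
  have := Fintype.ofFinite V
  classical
  let : LinearOrder V := linearOrderOfSTO WellOrderingRel
  exact exists_invertList_acyclic_of_backward_subset Finset.univ D fun _ _ _ _ => Finset.mem_univ _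

lemma inv_le_length {D : OGraph V} {L : List (Set V)} (h : (D.invertList L).Acyclic) :
    D.inv ≤ L.length :=
  Nat.sInf_le ⟨L, rfl, h⟩

lemma exists_invertList_acyclic_length_eq_inv [Finite V] (D : OGraph V) :
    ∃ L : List (Set V), L.length = D.inv ∧ (D.invertList L).Acyclic := by
  obtain ⟨L, hL⟩ := D.exists_invertList_acyclic
  exact Nat.sInf_mem (s := {m | ∃ L : List (Set V), L.length = m ∧ (D.invertList L).Acyclic})
    ⟨L.length, L, rfl, hL⟩

lemma inv_mono [Finite V] {D E : OGraph V} (h : D ≤ E) : D.inv ≤ E.inv := by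
  obtain ⟨L, hlen, hL⟩ := E.exists_invertList_acyclic_length_eq_inv
  rw [← hlen]
  exact inv_le_length (hL.anti (invertList_mono h L))

end OGraph

open OGraph

/-- Every oriented graph extends to a tournament on the same vertex set with the
same inversion number. -/
theorem exists_tournament_extension {V : Type} [Fintype V] (D : OGraph V) :
    ∃ T : OGraph V, T.IsTournament ∧ (∀ u v, D.adj u v → T.adj u v) ∧
      T.inv = D.inv := by
  obtain ⟨L, hlen, hL⟩ := D.exists_invertList_acyclic_length_eq_inv
  obtain ⟨E, hEtour, hle, hEacyc⟩ := hL.exists_tournament_le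
  set T := E.invertList L.reverse
  have hDT : D ≤ T := by
    simpa only [invertList_invertList_reverse] using invertList_mono hle L.reverse
  have hTE : T.invertList L = E := by
    simpa only [List.reverse_reverse] using E.invertList_invertList_reverse L.reverse
  refine ⟨T, hEtour.invertList _, hDT, le_antisymm ?_ (inv_mono hDT)⟩
  exact hlen ▸ inv_le_length (hTE ▸ hEacyc)
end

section
/- For tournaments D₁ and D₂, tmr(D₁ → D₂) ≤ tmr(D₁) + tmr(D₂). -/
open OGraph

/-! Take decycling matrices `M₁`, `M₂` of minimum rank for `D₁`, `D₂`; they exist because every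
oriented graph has one (flip the arcs running backwards in a well-order), so `sInf` is attained.
The block-diagonal matrix `fromBlocks M₁ 0 0 M₂` flips no arc between the two parts, so the
reoriented dijoin is the lexicographic sum of the two reoriented graphs. A directed cycle in it
therefore stays inside one part, where none exists, and the rank of the block matrix is at most
`rank M₁ + rank M₂`. -/

open Relation Matrix

namespace Matrix

variable {K m n : Type} [Field K]

theorem rank_add_le [Fintype n] (A B : Matrix m n K) : (A + B).rank ≤ A.rank + B.rank := by
  unfold Matrix.rank
  rw [mulVecLin_add]
  exact (Submodule.finrank_mono (LinearMap.range_add_le _ _)).trans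
    (Submodule.finrank_add_le_finrank_add_finrank _ _)

theorem rank_fromBlocks_zero_zero_le [Fintype m] [Fintype n] [DecidableEq m] [DecidableEq n]
    (A : Matrix m m K) (D : Matrix n n K) :
    (fromBlocks A 0 0 D).rank ≤ A.rank + D.rank := by
  have hA : fromBlocks A 0 0 (0 : Matrix n n K) =
      fromRows (1 : Matrix m m K) 0 * A * fromCols 1 (0 : Matrix m n K) := by
    ext (i | i) (j | j) <;> simp
  have hD : fromBlocks (0 : Matrix m m K) 0 0 D =
      fromRows (0 : Matrix m n K) 1 * D * fromCols (0 : Matrix n m K) 1 := by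
    ext (i | i) (j | j) <;> simp
  calc (fromBlocks A 0 0 D).rank
      = (fromBlocks A 0 0 0 + fromBlocks 0 0 0 D).rank := by simp [fromBlocks_add]
    _ ≤ (fromBlocks A 0 0 0).rank + (fromBlocks 0 0 0 D).rank := rank_add_le _ _
    _ ≤ A.rank + D.rank := by
      rw [hA, hD]
      exact add_le_add ((rank_mul_le_left _ _).trans (rank_mul_le_right _ _))
        ((rank_mul_le_left _ _).trans (rank_mul_le_right _ _))

end Matrix

theorem Relation.transGen_sumLex_le {α β : Type*} (r : α → α → Prop) (s : β → β → Prop) :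
    TransGen (Sum.Lex r s) ≤ Sum.Lex (TransGen r) (TransGen s) := by
  rw [← transGen_eq_self (r := Sum.Lex (TransGen r) (TransGen s))]
  exact TransGen.mono fun _ _ ↦ Sum.Lex.mono (fun _ _ ↦ .single) (fun _ _ ↦ .single)

namespace OGraph

variable {V V₁ V₂ : Type}

def flipAdj (D : OGraph V) (M : Matrix V V (ZMod 2)) (u w : V) : Prop :=
  (M u w = 1 ∧ D.adj w u) ∨ (M u w ≠ 1 ∧ D.adj u w)

theorem isDecyclingMatrix_iff (D : OGraph V) (M : Matrix V V (ZMod 2)) :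
    D.IsDecyclingMatrix M ↔ M.IsSymm ∧ ∀ v, ¬ TransGen (D.flipAdj M) v v :=
  Iff.rfl

theorem flipAdj_dijoin_fromBlocks (D₁ : OGraph V₁) (D₂ : OGraph V₂)
    (M₁ : Matrix V₁ V₁ (ZMod 2)) (M₂ : Matrix V₂ V₂ (ZMod 2)) :
    (D₁.dijoin D₂).flipAdj (fromBlocks M₁ 0 0 M₂) = Sum.Lex (D₁.flipAdj M₁) (D₂.flipAdj M₂) := by
  ext (u | u) (w | w) <;> simp [flipAdj, dijoin]

theorem isDecyclingMatrix_fromBlocks {D₁ : OGraph V₁} {D₂ : OGraph V₂}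
    {M₁ : Matrix V₁ V₁ (ZMod 2)} {M₂ : Matrix V₂ V₂ (ZMod 2)}
    (h₁ : D₁.IsDecyclingMatrix M₁) (h₂ : D₂.IsDecyclingMatrix M₂) :
    (D₁.dijoin D₂).IsDecyclingMatrix (fromBlocks M₁ 0 0 M₂) := by
  rw [isDecyclingMatrix_iff, flipAdj_dijoin_fromBlocks]
  refine ⟨h₁.1.fromBlocks transpose_zero h₂.1, fun v hv ↦ ?_⟩
  rcases transGen_sumLex_le _ _ v v hv with ⟨hv⟩ | ⟨hv⟩
  exacts [h₁.2 _ hv, h₂.2 _ hv]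

open Classical in
noncomputable def backwardArcMatrix (D : OGraph V) (r : V → V → Prop) : Matrix V V (ZMod 2) :=
  of fun u v ↦ if D.adj u v ∧ r v u ∨ D.adj v u ∧ r u v then 1 else 0

theorem backwardArcMatrix_isSymm (D : OGraph V) (r : V → V → Prop) :
    (D.backwardArcMatrix r).IsSymm := by
  ext u v
  simp only [backwardArcMatrix, transpose_apply, of_apply]
  congr 1
  exact propext or_comm

theorem flipAdj_backwardArcMatrix (D : OGraph V) {r : V → V → Prop} [Std.Trichotomous r]
    {u w : V} (h : D.flipAdj (D.backwardArcMatrix r) u w) : r u w := by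
  rcases h with ⟨hM, hwu⟩ | ⟨hM, huw⟩
  · have hback : D.adj u w ∧ r w u ∨ D.adj w u ∧ r u w := by
      by_contra hc
      simp [backwardArcMatrix, hc] at hM
    rcases hback with ⟨huw, -⟩ | ⟨-, hr⟩
    exacts [(D.asymm u w huw hwu).elim, hr]
  · have hwu : ¬ r w u := fun hwu ↦ hM (by simp [backwardArcMatrix, huw, hwu])
    by_contra huw'
    exact D.loopless u (Std.Trichotomous.trichotomous u w huw' hwu ▸ huw)

theorem exists_isDecyclingMatrix (D : OGraph V) : ∃ M, D.IsDecyclingMatrix M := by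
  refine ⟨D.backwardArcMatrix WellOrderingRel, D.backwardArcMatrix_isSymm _, fun v hv ↦ ?_⟩
  have hr := TransGen.mono (fun _ _ ↦ D.flipAdj_backwardArcMatrix) v v hv
  rw [transGen_eq_self] at hr
  exact irrefl v hr

theorem tmr_le_rank [Fintype V] {D : OGraph V} {M : Matrix V V (ZMod 2)}
    (hM : D.IsDecyclingMatrix M) : D.tmr ≤ M.rank :=
  Nat.sInf_le ⟨M, hM, rfl⟩

theorem exists_isDecyclingMatrix_rank_eq_tmr [Fintype V] (D : OGraph V) :
    ∃ M, D.IsDecyclingMatrix M ∧ M.rank = D.tmr :=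
  let ⟨M, hM⟩ := D.exists_isDecyclingMatrix
  Nat.sInf_mem (s := {r | ∃ M, D.IsDecyclingMatrix M ∧ M.rank = r}) ⟨M.rank, M, hM, rfl⟩

end OGraph

theorem tmr_dijoin_le_general {V₁ V₂ : Type} [Fintype V₁] [Fintype V₂]
    (D₁ : OGraph V₁) (D₂ : OGraph V₂) :
    (D₁.dijoin D₂).tmr ≤ D₁.tmr + D₂.tmr := by
  classical
  obtain ⟨M₁, hM₁, h₁⟩ := D₁.exists_isDecyclingMatrix_rank_eq_tmr
  obtain ⟨M₂, hM₂, h₂⟩ := D₂.exists_isDecyclingMatrix_rank_eq_tmr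
  calc (D₁.dijoin D₂).tmr ≤ (fromBlocks M₁ 0 0 M₂).rank :=
        tmr_le_rank (isDecyclingMatrix_fromBlocks hM₁ hM₂)
    _ ≤ M₁.rank + M₂.rank := rank_fromBlocks_zero_zero_le M₁ M₂
    _ = D₁.tmr + D₂.tmr := by rw [h₁, h₂]

/-- For tournaments, `tmr (D₁ → D₂) ≤ tmr D₁ + tmr D₂`. -/
theorem tmr_dijoin_le {V₁ V₂ : Type} [Fintype V₁] [Fintype V₂]
    (D₁ : OGraph V₁) (D₂ : OGraph V₂)
    (hD₁ : D₁.IsTournament) (hD₂ : D₂.IsTournament) :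
    (D₁.dijoin D₂).tmr ≤ D₁.tmr + D₂.tmr :=
  tmr_dijoin_le_general D₁ D₂
end

section
/- Let D be a tournament and X₁,...,Xₘ a decycling family for D. For each vertex v let 𝐯 ∈ F_2^m be its characteristic vector (with i-th coordinate 1 iff v ∈ Xᵢ). Then the Gram matrix G with G_{uv} = 𝐮·𝐯 (dot product over F_2) is a decycling matrix for D, and consequently tmr(D) ≤ inv(D). -/
open OGraph

/-!
Record the decycling family `X₁, …, Xₘ` as the `m × V` matrix `B` over `F₂` whose columns are the
characteristic vectors. Inverting `Xᵢ` reverses `uv` iff `Bᵢᵤ Bᵢᵥ = 1`, and since reversing an arc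
twice restores it, the net effect of the whole family is to reverse `uv` iff `(Bᵀ B)ᵤᵥ = 1`. Hence
`Bᵀ B` is a decycling matrix, and its rank is at most `rank B ≤ m`.
-/

open Matrix

namespace OGraph

variable {V : Type}

def flipBy (r : V → V → Prop) (M : Matrix V V (ZMod 2)) (u w : V) : Prop :=
  (M u w = 1 ∧ r w u) ∨ (M u w ≠ 1 ∧ r u w)

theorem flipBy_zero (r : V → V → Prop) : flipBy r 0 = r := by
  funext u w
  simp [flipBy]

theorem flipBy_flipBy (r : V → V → Prop) {M : Matrix V V (ZMod 2)} (hM : M.IsSymm)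
    (N : Matrix V V (ZMod 2)) : flipBy (flipBy r M) N = flipBy r (M + N) := by
  funext u w
  simp only [flipBy, hM.apply u w, Matrix.add_apply, eq_iff_iff]
  have zero_or_one : ∀ x : ZMod 2, x = 0 ∨ x = 1 := by decide
  obtain ha | ha := zero_or_one (M u w) <;> obtain hb | hb := zero_or_one (N u w) <;>
    simp [ha, hb]

theorem invert_adj (D : OGraph V) (X : Set V) :
    (D.invert X).adj = flipBy D.adj (vecMulVec (X.indicator 1) (X.indicator 1)) := by
  funext u w
  by_cases hu : u ∈ X <;> by_cases hw : w ∈ X <;> simp [invert, flipBy, vecMulVec_apply, hu, hw]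

/-- Column `v` is the characteristic vector `𝐯 ∈ F₂^m` of the vertex `v`. -/
noncomputable def charMatrix (L : List (Set V)) : Matrix (Fin L.length) V (ZMod 2) :=
  Matrix.of fun i v => (L.get i).indicator (fun _ => 1) v

theorem charMatrix_gram_cons (X : Set V) (L : List (Set V)) :
    (charMatrix (X :: L))ᵀ * charMatrix (X :: L) =
      vecMulVec (X.indicator 1) (X.indicator 1) + (charMatrix L)ᵀ * charMatrix L := by
  ext u w
  simp [mul_apply, Fin.sum_univ_succ, charMatrix, vecMulVec_apply, Pi.one_def]

theorem invertList_adj (D : OGraph V) (L : List (Set V)) :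
    (D.invertList L).adj = flipBy D.adj ((charMatrix L)ᵀ * charMatrix L) := by
  induction L generalizing D with
  | nil =>
    ext u w
    simp [invertList, flipBy, mul_apply, charMatrix]
  | cons X L ih =>
    rw [charMatrix_gram_cons, ← flipBy_flipBy _ (transpose_vecMulVec _ _), ← invert_adj]
    exact ih (D.invert X)

theorem isDecyclingMatrix_charMatrix_gram (D : OGraph V) {L : List (Set V)}
    (hL : (D.invertList L).Acyclic) :
    D.IsDecyclingMatrix ((charMatrix L)ᵀ * charMatrix L) := by
  refine ⟨by simp [IsSymm, transpose_mul], fun v => ?_⟩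
  rw [Acyclic, invertList_adj] at hL
  exact hL v

theorem tmr_le_length_of_acyclic [Fintype V] (D : OGraph V) {L : List (Set V)}
    (hL : (D.invertList L).Acyclic) : D.tmr ≤ L.length :=
  calc D.tmr ≤ ((charMatrix L)ᵀ * charMatrix L).rank :=
        Nat.sInf_le ⟨_, isDecyclingMatrix_charMatrix_gram D hL, rfl⟩
    _ ≤ (charMatrix L).rank := rank_mul_le_right _ _
    _ ≤ L.length := by simpa using rank_le_card_height (charMatrix L)

theorem tmr_le_inv_of_acyclic [Fintype V] (D : OGraph V) {L : List (Set V)}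
    (hL : (D.invertList L).Acyclic) : D.tmr ≤ D.inv := by
  obtain ⟨L', hlen, hL'⟩ := Nat.sInf_mem (⟨L.length, L, rfl, hL⟩ :
    {m | ∃ L : List (Set V), L.length = m ∧ (D.invertList L).Acyclic}.Nonempty)
  exact (tmr_le_length_of_acyclic D hL').trans hlen.le

end OGraph

theorem gram_isDecyclingMatrix_and_tmr_le_inv_general {V : Type} [Fintype V]
    (D : OGraph V)
    (L : List (Set V)) (hL : (D.invertList L).Acyclic) :
    D.IsDecyclingMatrix
      (Matrix.of fun u v => ∑ i : Fin L.length,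
        (L.get i).indicator (fun _ => (1 : ZMod 2)) u *
          (L.get i).indicator (fun _ => (1 : ZMod 2)) v) ∧
    D.tmr ≤ D.inv :=
  ⟨isDecyclingMatrix_charMatrix_gram D hL, tmr_le_inv_of_acyclic D hL⟩

/-- The Gram matrix of the characteristic vectors of a decycling family is a
decycling matrix; consequently `tmr D ≤ inv D`. -/
theorem gram_isDecyclingMatrix_and_tmr_le_inv {V : Type} [Fintype V]
    (D : OGraph V) (hD : D.IsTournament)
    (L : List (Set V)) (hL : (D.invertList L).Acyclic) :
    D.IsDecyclingMatrix
      (Matrix.of fun u v => ∑ i : Fin L.length,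
        (L.get i).indicator (fun _ => (1 : ZMod 2)) u *
          (L.get i).indicator (fun _ => (1 : ZMod 2)) v) ∧
    D.tmr ≤ D.inv :=
  gram_isDecyclingMatrix_and_tmr_le_inv_general D L hL
end
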